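/- Let f, g be nonzero polynomials in k[x₀,…,x_n] with a fixed monomial order, and let a, b be monomials such that gcd(a,b) = gcd(a, LM(g)) = gcd(b, LM(f)) = 1. Then S(a·f, b·g) = a·b·S(f, g). -/

import Mathlib

open MvPolynomial
open scoped MonomialOrder

/-- The leading exponent (leading monomial) of a multivariate polynomial with
respect to a monomial order. -/
noncomputable def leadExp {σ K : Type*} [Field K] (m : MonomialOrder σ)
    (f : MvPolynomial σ K) : σ →₀ ℕ :=
  m.toSyn.symm (f.support.sup fun d => m.toSyn d)

/-- The leading coefficient of a multivariate polynomial with respect to a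
monomial order. -/
noncomputable def leadCoeff {σ K : Type*} [Field K] (m : MonomialOrder σ)
    (f : MvPolynomial σ K) : K :=
  f.coeff (leadExp m f)

/-- The S-polynomial `S(f,g) = (lcm(LM f, LM g)/LT f)·f − (lcm(LM f, LM g)/LT g)·g`. -/
noncomputable def sPoly {σ K : Type*} [Field K] (m : MonomialOrder σ)
    (f g : MvPolynomial σ K) : MvPolynomial σ K :=
  monomial (leadExp m f ⊔ leadExp m g - leadExp m f) (leadCoeff m f)⁻¹ * f -
    monomial (leadExp m f ⊔ leadExp m g - leadExp m g) (leadCoeff m g)⁻¹ * g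

/-!
`sPoly` is Mathlib's `MonomialOrder.sPolynomial` divided by the product of the two leading
coefficients, and multiplying by monic monomials does not change leading coefficients. So
`MonomialOrder.sPolynomial_monomial_mul` reduces the claim to the exponent identity
`lcm(a·LM f, b·LM g) = a·b·lcm(LM f, LM g)`, which the coprimality hypotheses give
coordinatewise.
-/

namespace Finsupp

theorem add_sup_add_tsub_sup_of_inf_eq_zero {σ : Type*} {a b u v : σ →₀ ℕ}
    (hab : a ⊓ b = 0) (hav : a ⊓ v = 0) (hbu : b ⊓ u = 0) :
    (a + u) ⊔ (b + v) - u ⊔ v = a + b := by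
  ext x
  have hab := DFunLike.congr_fun hab x
  have hav := DFunLike.congr_fun hav x
  have hbu := DFunLike.congr_fun hbu x
  simp only [inf_apply, tsub_apply, add_apply, sup_apply, coe_zero, Pi.zero_apply] at *
  omega

end Finsupp

section

variable {σ K : Type*} [Field K] (m : MonomialOrder σ)

theorem leadExp_eq_degree (f : MvPolynomial σ K) : leadExp m f = m.degree f := rfl

theorem leadCoeff_eq_leadingCoeff (f : MvPolynomial σ K) : leadCoeff m f = m.leadingCoeff f := rfl

theorem sPoly_eq_C_mul_sPolynomial {f g : MvPolynomial σ K} (hf : f ≠ 0) (hg : g ≠ 0) :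
    sPoly m f g = C (m.leadingCoeff f * m.leadingCoeff g)⁻¹ * m.sPolynomial f g := by
  have hcf : m.leadingCoeff f ≠ 0 := m.leadingCoeff_ne_zero_iff.mpr hf
  have hcg : m.leadingCoeff g ≠ 0 := m.leadingCoeff_ne_zero_iff.mpr hg
  rw [sPoly, m.sPolynomial_def, mul_sub, ← mul_assoc, ← mul_assoc, C_mul_monomial,
    C_mul_monomial, leadExp_eq_degree, leadExp_eq_degree, leadCoeff_eq_leadingCoeff,
    leadCoeff_eq_leadingCoeff, mul_inv, inv_mul_cancel_right₀ hcg, mul_right_comm,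
    inv_mul_cancel₀ hcf, one_mul]

theorem sPoly_monomial_one_mul {f g : MvPolynomial σ K} (hf : f ≠ 0) (hg : g ≠ 0)
    (a b : σ →₀ ℕ) :
    sPoly m (monomial a 1 * f) (monomial b 1 * g) =
      monomial ((a + leadExp m f) ⊔ (b + leadExp m g) - leadExp m f ⊔ leadExp m g) 1 *
        sPoly m f g := by
  have haf : monomial a (1 : K) * f ≠ 0 := mul_ne_zero (by simp) hf
  have hbg : monomial b (1 : K) * g ≠ 0 := mul_ne_zero (by simp) hg
  rw [sPoly_eq_C_mul_sPolynomial m haf hbg, sPoly_eq_C_mul_sPolynomial m hf hg,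
    m.sPolynomial_monomial_mul, leadExp_eq_degree, leadExp_eq_degree, m.leadingCoeff_mul,
    m.leadingCoeff_mul, m.leadingCoeff_monomial, m.leadingCoeff_monomial, one_mul, one_mul,
    one_mul, mul_left_comm]

end

/-- For nonzero `f, g` and monomials `a, b` with
`gcd(a,b) = gcd(a, LM g) = gcd(b, LM f) = 1`, one has `S(a·f, b·g) = a·b·S(f, g)`. -/
theorem sPoly_smul_monomial_coprime {σ K : Type*} [Field K] (m : MonomialOrder σ)
    (f g : MvPolynomial σ K) (hf : f ≠ 0) (hg : g ≠ 0) (a b : σ →₀ ℕ)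
    (hab : a ⊓ b = 0) (hag : a ⊓ leadExp m g = 0) (hbf : b ⊓ leadExp m f = 0) :
    sPoly m (monomial a 1 * f) (monomial b 1 * g) = monomial (a + b) 1 * sPoly m f g := by
  rw [sPoly_monomial_one_mul m hf hg, Finsupp.add_sup_add_tsub_sup_of_inf_eq_zero hab hag hbf]
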